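/- If the Euclidean distance from a0 to the Newton polytope P satisfies d(a0, P) > diam(P)/m, where diam(P) is the Euclidean diameter of P, then the set U₋ = {x ∈ ℝ^m : Ψ(x) < 1} is a nonempty, open and unbounded subset of ℝ^m. -/

import Mathlib

open scoped BigOperators RealInnerProductSpace
open Finset

noncomputable section

/-- `ℝ^m` with the standard (Euclidean) inner product. -/
abbrev Vm (m : ℕ) := EuclideanSpace ℝ (Fin m)

/-- The diagonal covariance `K(x) = Σ_{a∈A} α_a² exp(2⟨a,x⟩)`. -/
def covK {m : ℕ} (A : Finset (Vm m)) (α : Vm m → ℝ) (x : Vm m) : ℝ :=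
  ∑ a ∈ A, (α a) ^ 2 * Real.exp (2 * ⟪a, x⟫)

/-- The potential `Φ(x) = (1/2) log K(x)`. -/
def pot {m : ℕ} (A : Finset (Vm m)) (α : Vm m → ℝ) (x : Vm m) : ℝ :=
  (1 / 2) * Real.log (covK A α x)

/-- The weights `λ_a(x) = α_a² exp(2⟨a,x⟩)/K(x)`. -/
def wt {m : ℕ} (A : Finset (Vm m)) (α : Vm m → ℝ) (a x : Vm m) : ℝ :=
  (α a) ^ 2 * Real.exp (2 * ⟪a, x⟫) / covK A α x

/-- The moment map `μ(x) = Σ_{a∈A} λ_a(x) • a`. -/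
def mmap {m : ℕ} (A : Finset (Vm m)) (α : Vm m → ℝ) (x : Vm m) : Vm m :=
  ∑ a ∈ A, wt A α a x • a

/-- The Adler–Taylor quadratic form `g_x(v) = Σ_{a∈A} λ_a(x)·⟨a − μ(x), v⟩²`. -/
def atForm {m : ℕ} (A : Finset (Vm m)) (α : Vm m → ℝ) (x v : Vm m) : ℝ :=
  ∑ a ∈ A, wt A α a x * ⟪a - mmap A α x, v⟫ ^ 2


/-- The matrix `G(x) = Σ_{a∈A} λ_a(x)·(a − μ(x))(a − μ(x))ᵀ`. -/
def Gmat {m : ℕ} (A : Finset (Vm m)) (α : Vm m → ℝ) (x : Vm m) :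
    Matrix (Fin m) (Fin m) ℝ :=
  Matrix.of fun i j => ∑ a ∈ A, wt A α a x * ((a - mmap A α x) i * (a - mmap A α x) j)

/-- The quantity `⟨μ(x) − a0, G(x)⁻¹(μ(x) − a0)⟩`. -/
def qform {m : ℕ} (A : Finset (Vm m)) (α : Vm m → ℝ) (a0 : Vm m) (x : Vm m) : ℝ :=
  dotProduct (fun i => (mmap A α x - a0) i)
    ((Gmat A α x)⁻¹.mulVec fun i => (mmap A α x - a0) i)

/-- `f0(x) = α0·exp(⟨a0,x⟩)`. -/
def f0e {m : ℕ} (a0 : Vm m) (α0 : ℝ) (x : Vm m) : ℝ := α0 * Real.exp ⟪a0, x⟫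

/-- `K0(x) = K(x) + f0(x)²`. -/
def K0e {m : ℕ} (A : Finset (Vm m)) (α : Vm m → ℝ) (a0 : Vm m) (α0 : ℝ) (x : Vm m) : ℝ :=
  covK A α x + f0e a0 α0 x ^ 2

/-- `Φ0(x) = Φ(x) − log f0(x)`. -/
def Phi0e {m : ℕ} (A : Finset (Vm m)) (α : Vm m → ℝ) (a0 : Vm m) (α0 : ℝ) (x : Vm m) : ℝ :=
  pot A α x - Real.log (f0e a0 α0 x)

/-- `Ψ(x) = (K(x)/K0(x))^{m/2}·sqrt(1 + (f0(x)²/K0(x))·⟨μ(x) − a0, G(x)⁻¹(μ(x) − a0)⟩)`. -/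
def PsiF {m : ℕ} (A : Finset (Vm m)) (α : Vm m → ℝ) (a0 : Vm m) (α0 : ℝ) (x : Vm m) : ℝ :=
  (covK A α x / K0e A α a0 α0 x) ^ ((m : ℝ) / 2) *
    Real.sqrt (1 + (f0e a0 α0 x ^ 2 / K0e A α a0 α0 x) * qform A α a0 x)

/-! Let `p` be the point of `P` nearest to `a0`, `u` the unit vector from `p` towards `a0`,
`d = d(a0, P)` and `D = diam P`. For `t ≥ 0` and `a ∈ A`, the exponent `⟨a, tu⟩` lies in
`[⟨p, tu⟩ - tD, ⟨p, tu⟩]`, while `⟨a0, tu⟩ = ⟨p, tu⟩ + td`. Hence `K/K0 = O(e^{-2td})` and every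
weight `λ_a(tu)` is at least a constant times `e^{-2tD}`. Since `μ` takes values in the compact
set `P` and `A` affinely spans, this gives `G(tu) ≥ c e^{-2tD}`, so `⟨μ - a0, G⁻¹(μ - a0)⟩` is
`O(e^{2tD})`. Altogether `Ψ(tu)² = O(e^{-2t(dm - D)}) → 0`, so the ray eventually lies in `U₋`,
which is open because `Ψ` is continuous (`G` is invertible everywhere). -/

open Filter Topology Bornology Metric Matrix

section InnerProductSpace

variable {E : Type*} [NormedAddCommGroup E] [InnerProductSpace ℝ E] {A : Finset E}

theorem eq_zero_of_forall_inner_sub_eq_zero (hspan : affineSpan ℝ (A : Set E) = ⊤) {μ y : E}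
    (h : ∀ a ∈ A, ⟪a - μ, y⟫ = 0) : y = 0 := by
  have hle : vectorSpan ℝ (A : Set E) ≤ (ℝ ∙ y)ᗮ := by
    refine Submodule.span_le.mpr ?_
    rintro _ ⟨a, ha, b, hb, rfl⟩
    rw [SetLike.mem_coe, Submodule.mem_orthogonal_singleton_iff_inner_left]
    change ⟪a - b, y⟫ = 0
    rw [show a - b = (a - μ) - (b - μ) by abel, inner_sub_left, h a ha, h b hb, sub_zero]
  have hy : y ∈ (ℝ ∙ y)ᗮ := hle <| by
    rw [← direction_affineSpan, hspan, AffineSubspace.direction_top]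
    exact Submodule.mem_top
  exact inner_self_eq_zero.mp (Submodule.mem_orthogonal_singleton_iff_inner_right.mp hy)

theorem sum_mul_inner_sub_sq_pos (hspan : affineSpan ℝ (A : Set E) = ⊤) {w : E → ℝ}
    (hw : ∀ a ∈ A, 0 < w a) (μ : E) {y : E} (hy : y ≠ 0) :
    0 < ∑ a ∈ A, w a * ⟪a - μ, y⟫ ^ 2 := by
  refine Finset.sum_pos' (fun a ha => by have := hw a ha; positivity) ?_
  by_contra! h
  refine hy (eq_zero_of_forall_inner_sub_eq_zero hspan (μ := μ) fun a ha => ?_)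
  have hsq : ⟪a - μ, y⟫ ^ 2 ≤ 0 := nonpos_of_mul_nonpos_right (h a ha) (hw a ha)
  exact pow_eq_zero_iff two_ne_zero |>.mp (le_antisymm hsq (sq_nonneg _))

theorem exists_pos_mul_norm_sq_le_sum_inner_sub_sq [FiniteDimensional ℝ E]
    (hspan : affineSpan ℝ (A : Set E) = ⊤) {K : Set E} (hK : IsCompact K) :
    ∃ c > 0, ∀ μ ∈ K, ∀ y : E, c * ‖y‖ ^ 2 ≤ ∑ a ∈ A, ⟪a - μ, y⟫ ^ 2 := by
  have hcont : Continuous fun q : E × E => ∑ a ∈ A, ⟪a - q.1, q.2⟫ ^ 2 := by fun_prop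
  obtain ⟨c, hc, hcK⟩ := (hK.prod (isCompact_sphere (0 : E) 1)).exists_forall_le'
    hcont.continuousOn (a := 0) fun q hq => by
      simpa using sum_mul_inner_sub_sq_pos hspan (w := fun _ => 1) (fun _ _ => one_pos) q.1
        (ne_zero_of_mem_unit_sphere ⟨q.2, hq.2⟩)
  refine ⟨c, hc, fun μ hμ y => ?_⟩
  rcases eq_or_ne y 0 with rfl | hy
  · simp
  have hny : 0 < ‖y‖ := norm_pos_iff.mpr hy
  have := hcK (μ, ‖y‖⁻¹ • y) ⟨hμ, by simp [norm_smul, hny.ne']⟩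
  simp only [inner_smul_right, mul_pow, ← Finset.mul_sum, inv_pow] at this
  rwa [← div_eq_inv_mul, le_div_iff₀ (by positivity)] at this

theorem exists_unit_inner_eq_infDist {P : Set E} (hPc : IsCompact P) (hPconv : Convex ℝ P)
    (hPne : P.Nonempty) {a₀ : E} (hd : 0 < infDist a₀ P) :
    ∃ p ∈ P, ∃ u : E, ‖u‖ = 1 ∧ ⟪a₀ - p, u⟫ = infDist a₀ P ∧ ∀ b ∈ P, ⟪b - p, u⟫ ≤ 0 := by
  obtain ⟨p, hp, hdp⟩ := hPc.exists_infDist_eq_dist hPne a₀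
  have hpos : 0 < ‖a₀ - p‖ := by rwa [← dist_eq_norm, ← hdp]
  have hobtuse : ∀ b ∈ P, ⟪a₀ - p, b - p⟫ ≤ 0 := by
    refine (norm_eq_iInf_iff_real_inner_le_zero hPconv hp).mp ?_
    simp only [← dist_eq_norm, ← hdp, infDist_eq_iInf]
  refine ⟨p, hp, ‖a₀ - p‖⁻¹ • (a₀ - p), by simp [norm_smul, hpos.ne'], ?_, fun b hb => ?_⟩
  · rw [inner_smul_right, real_inner_self_eq_norm_sq, hdp, dist_eq_norm]
    field_simp
  · rw [inner_smul_right, real_inner_comm]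
    exact mul_nonpos_of_nonneg_of_nonpos (by positivity) (hobtuse b hb)

theorem not_isBounded_of_eventually_smul_mem {S : Set E} {u : E} (hu : u ≠ 0)
    (h : ∀ᶠ t : ℝ in atTop, t • u ∈ S) : ¬ IsBounded S := by
  intro hS
  have hcob : Tendsto (fun t : ℝ => t • u) atTop (cobounded E) := by
    rw [← tendsto_norm_atTop_iff_cobounded]
    simp only [norm_smul, Real.norm_eq_abs]
    exact tendsto_abs_atTop_atTop.atTop_mul_const (norm_pos_iff.mpr hu)
  obtain ⟨t, htS, htS'⟩ := (h.and (hcob.eventually hS)).exists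
  exact htS' htS

theorem inner_smul_bounds_of_mem {P : Set E} (hP : IsBounded P) {p u b : E} (hp : p ∈ P)
    (hb : b ∈ P) (hu : ‖u‖ = 1) (hbp : ⟪b - p, u⟫ ≤ 0) {t : ℝ} (ht : 0 ≤ t) :
    ⟪b, t • u⟫ ≤ ⟪p, t • u⟫ ∧ ⟪p, t • u⟫ - t * diam P ≤ ⟪b, t • u⟫ := by
  have hdiam : ⟪p - b, u⟫ ≤ diam P :=
    (real_inner_le_norm _ _).trans <| by
      rw [hu, mul_one, ← dist_eq_norm]
      exact dist_le_diam_of_mem hP hp hb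
  simp only [inner_smul_right, inner_sub_left] at hbp hdiam ⊢
  constructor <;> nlinarith

end InnerProductSpace

namespace Matrix

variable {n : Type*} [Fintype n] [DecidableEq n]

theorem det_ne_zero_of_forall_dotProduct_mulVec_pos {M : Matrix n n ℝ}
    (hM : ∀ y ≠ 0, 0 < y ⬝ᵥ (M *ᵥ y)) : M.det ≠ 0 := by
  intro hdet
  obtain ⟨y, hy, hMy⟩ := exists_mulVec_eq_zero_iff.mpr hdet
  simpa [hMy] using hM y hy

theorem dotProduct_inv_mulVec_le {M : Matrix n n ℝ} {ε : ℝ} (hε : 0 < ε)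
    (hM : ∀ y : EuclideanSpace ℝ n, ε * ‖y‖ ^ 2 ≤ y.ofLp ⬝ᵥ (M *ᵥ y.ofLp))
    (w : EuclideanSpace ℝ n) :
    0 ≤ w.ofLp ⬝ᵥ (M⁻¹ *ᵥ w.ofLp) ∧ w.ofLp ⬝ᵥ (M⁻¹ *ᵥ w.ofLp) ≤ ‖w‖ ^ 2 / ε := by
  have hdet : M.det ≠ 0 := det_ne_zero_of_forall_dotProduct_mulVec_pos fun y hy =>
    (mul_pos hε (pow_pos (norm_pos_iff.mpr (by simpa using hy)) 2)).trans_le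
      (hM (WithLp.toLp 2 y))
  set y : EuclideanSpace ℝ n := WithLp.toLp 2 (M⁻¹ *ᵥ w.ofLp)
  have hwy : w.ofLp ⬝ᵥ (M⁻¹ *ᵥ w.ofLp) = ⟪w, y⟫ := by
    simp [y, EuclideanSpace.inner_eq_star_dotProduct, dotProduct_comm]
  have hyMy : y.ofLp ⬝ᵥ (M *ᵥ y.ofLp) = ⟪w, y⟫ := by
    simp [y, mulVec_mulVec, mul_nonsing_inv _ (isUnit_iff_ne_zero.mpr hdet),
      EuclideanSpace.inner_eq_star_dotProduct]
  have hlow : ε * ‖y‖ ^ 2 ≤ ⟪w, y⟫ := hyMy ▸ hM y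
  have hcs : ⟪w, y⟫ ≤ ‖w‖ * ‖y‖ := real_inner_le_norm w y
  rw [hwy]
  refine ⟨le_trans (by positivity) hlow, ?_⟩
  have hεy : ε * ‖y‖ ≤ ‖w‖ := by
    rcases (norm_nonneg y).eq_or_lt with hy | hy
    · simp [← hy]
    · nlinarith
  rw [le_div_iff₀ hε]
  nlinarith [mul_le_mul_of_nonneg_left hεy (norm_nonneg w), mul_le_mul_of_nonneg_right hcs hε.le]

end Matrix

theorem tendsto_pow_mul_one_add_of_le_exp {r q : ℝ → ℝ} {B C d D : ℝ} {m : ℕ} (hD : 0 ≤ D)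
    (hDd : D < d * m) (hr : ∀ᶠ t in atTop, 0 ≤ r t ∧ r t ≤ B * Real.exp (-(d * t)))
    (hq : ∀ᶠ t in atTop, 0 ≤ q t ∧ q t ≤ C * Real.exp (D * t)) :
    Tendsto (fun t => r t ^ m * (1 + q t)) atTop (𝓝 0) := by
  have hdecay : ∀ k : ℝ, 0 < k → Tendsto (fun t => Real.exp (-(k * t))) atTop (𝓝 0) :=
    fun k hk => Real.tendsto_exp_neg_atTop_nhds_zero.comp (tendsto_id.const_mul_atTop hk)
  have hbound : Tendsto (fun t => B ^ m * (Real.exp (-(d * m * t)) +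
      C * Real.exp (-((d * m - D) * t)))) atTop (𝓝 0) := by
    simpa using ((hdecay _ (hD.trans_lt hDd)).add
      ((hdecay _ (sub_pos.mpr hDd)).const_mul C)).const_mul (B ^ m)
  refine tendsto_of_tendsto_of_tendsto_of_le_of_le' tendsto_const_nhds hbound ?_ ?_
  · filter_upwards [hr, hq] with t ⟨hr0, _⟩ ⟨hq0, _⟩
    positivity
  · filter_upwards [hr, hq] with t ⟨hr0, hrle⟩ ⟨hq0, hqle⟩
    have hpow : Real.exp (-(d * t)) ^ m = Real.exp (-(d * m * t)) := by
      rw [← Real.exp_nat_mul]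
      ring_nf
    have hshift : Real.exp (-(d * m * t)) * Real.exp (D * t) =
        Real.exp (-((d * m - D) * t)) := by
      rw [← Real.exp_add]
      ring_nf
    calc r t ^ m * (1 + q t) ≤ (B * Real.exp (-(d * t))) ^ m * (1 + C * Real.exp (D * t)) := by
          have := hr0.trans hrle
          gcongr
      _ = _ := by
          rw [mul_pow, hpow, ← hshift]
          ring

section Model

variable {m : ℕ} {A : Finset (Vm m)} {α : Vm m → ℝ}

theorem covK_nonneg (x : Vm m) : 0 ≤ covK A α x :=
  Finset.sum_nonneg fun _ _ => by positivity

theorem covK_pos (hA : A.Nonempty) (hα : ∀ a ∈ A, 0 < α a) (x : Vm m) : 0 < covK A α x :=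
  Finset.sum_pos (fun a ha => by have := hα a ha; positivity) hA

theorem wt_pos (hA : A.Nonempty) (hα : ∀ a ∈ A, 0 < α a) {a : Vm m} (ha : a ∈ A) (x : Vm m) :
    0 < wt A α a x := by
  have := covK_pos hA hα x
  have := hα a ha
  unfold wt
  positivity

theorem sum_wt (hA : A.Nonempty) (hα : ∀ a ∈ A, 0 < α a) (x : Vm m) :
    ∑ a ∈ A, wt A α a x = 1 := by
  simp only [wt, ← Finset.sum_div]
  exact div_self (covK_pos hA hα x).ne'

theorem mmap_mem_convexHull (hA : A.Nonempty) (hα : ∀ a ∈ A, 0 < α a) (x : Vm m) :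
    mmap A α x ∈ convexHull ℝ (A : Set (Vm m)) := by
  have h := Finset.centerMass_mem_convexHull A (fun a ha => (wt_pos hA hα ha x).le)
    (by rw [sum_wt hA hα x]; exact one_pos) (fun a ha => Finset.mem_coe.mpr ha)
  rwa [Finset.centerMass_eq_of_sum_1 _ _ (sum_wt hA hα x)] at h

theorem dotProduct_Gmat_mulVec (x y : Vm m) :
    y.ofLp ⬝ᵥ (Gmat A α x *ᵥ y.ofLp) = atForm A α x y := by
  simp only [dotProduct, Matrix.mulVec, Gmat, Matrix.of_apply, atForm,
    EuclideanSpace.inner_eq_star_dotProduct, star_trivial, Finset.mul_sum, Finset.sum_mul, sq]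
  conv_rhs => rw [Finset.sum_comm]
  refine Finset.sum_congr rfl fun j _ => ?_
  conv_rhs => rw [Finset.sum_comm]
  refine Finset.sum_congr rfl fun i _ => Finset.sum_congr rfl fun a _ => ?_
  ring

theorem atForm_pos (hA : A.Nonempty) (hα : ∀ a ∈ A, 0 < α a)
    (hspan : affineSpan ℝ (A : Set (Vm m)) = ⊤) (x : Vm m) {y : Vm m} (hy : y ≠ 0) :
    0 < atForm A α x y :=
  sum_mul_inner_sub_sq_pos hspan (fun _ ha => wt_pos hA hα ha x) _ hy

theorem det_Gmat_ne_zero (hA : A.Nonempty) (hα : ∀ a ∈ A, 0 < α a)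
    (hspan : affineSpan ℝ (A : Set (Vm m)) = ⊤) (x : Vm m) : (Gmat A α x).det ≠ 0 :=
  det_ne_zero_of_forall_dotProduct_mulVec_pos fun y hy => by
    simpa [← dotProduct_Gmat_mulVec] using
      atForm_pos hA hα hspan x (y := WithLp.toLp 2 y) (by simpa using hy)

theorem continuous_covK : Continuous (covK A α) := by
  unfold covK
  fun_prop

theorem continuous_wt (hA : A.Nonempty) (hα : ∀ a ∈ A, 0 < α a) (a : Vm m) :
    Continuous (wt A α a) := by
  unfold wt
  exact Continuous.div (by fun_prop) continuous_covK fun x => (covK_pos hA hα x).ne'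

theorem continuous_mmap (hA : A.Nonempty) (hα : ∀ a ∈ A, 0 < α a) : Continuous (mmap A α) :=
  continuous_finsetSum _ fun a _ => (continuous_wt hA hα a).smul continuous_const

theorem continuous_Gmat (hA : A.Nonempty) (hα : ∀ a ∈ A, 0 < α a) : Continuous (Gmat A α) := by
  have := continuous_mmap hA hα
  have := continuous_wt hA hα
  refine continuous_matrix fun i j => ?_
  unfold Gmat
  fun_prop

theorem continuous_qform (hA : A.Nonempty) (hα : ∀ a ∈ A, 0 < α a)
    (hspan : affineSpan ℝ (A : Set (Vm m)) = ⊤) (a0 : Vm m) : Continuous (qform A α a0) := by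
  have hinv : Continuous fun x => (Gmat A α x)⁻¹ :=
    continuous_iff_continuousAt.mpr fun x =>
      (continuousAt_matrix_inv _ <| by
        simpa [Ring.inverse_eq_inv'] using
          continuousAt_inv₀ (det_Gmat_ne_zero hA hα hspan x)).comp
        (continuous_Gmat hA hα).continuousAt
  have := continuous_mmap hA hα
  unfold qform
  fun_prop

theorem continuous_PsiF (hA : A.Nonempty) (hα : ∀ a ∈ A, 0 < α a)
    (hspan : affineSpan ℝ (A : Set (Vm m)) = ⊤) (a0 : Vm m) (α0 : ℝ) :
    Continuous (PsiF A α a0 α0) := by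
  have hK0 : ∀ x, K0e A α a0 α0 x ≠ 0 := fun x =>
    (add_pos_of_pos_of_nonneg (covK_pos hA hα x) (sq_nonneg _)).ne'
  have hf0 : Continuous (f0e a0 α0) := by unfold f0e; fun_prop
  have hK0c : Continuous (K0e A α a0 α0) := continuous_covK.add (hf0.pow 2)
  refine Continuous.mul ?_ ?_
  · exact (continuous_covK.div hK0c hK0).rpow_const fun _ => Or.inr (by positivity)
  · exact Real.continuous_sqrt.comp <| continuous_const.add <|
      ((hf0.pow 2).div hK0c hK0).mul (continuous_qform hA hα hspan a0)

theorem covK_div_K0e_nonneg (a0 : Vm m) (α0 : ℝ) (x : Vm m) :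
    0 ≤ covK A α x / K0e A α a0 α0 x :=
  div_nonneg (covK_nonneg x) (add_nonneg (covK_nonneg x) (sq_nonneg _))

theorem PsiF_nonneg (a0 : Vm m) (α0 : ℝ) (x : Vm m) : 0 ≤ PsiF A α a0 α0 x :=
  mul_nonneg (Real.rpow_nonneg (covK_div_K0e_nonneg a0 α0 x) _) (Real.sqrt_nonneg _)

theorem covK_le_of_forall_inner_le {x : Vm m} {s : ℝ} (h : ∀ a ∈ A, ⟪a, x⟫ ≤ s) :
    covK A α x ≤ (∑ a ∈ A, α a ^ 2) * Real.exp (2 * s) := by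
  unfold covK
  rw [Finset.sum_mul]
  gcongr with a ha
  exact h a ha

theorem wt_ge_of_inner_ge (hA : A.Nonempty) (hα : ∀ a ∈ A, 0 < α a) {b x : Vm m}
    {s r : ℝ} (h : ∀ a ∈ A, ⟪a, x⟫ ≤ s) (hbs : s - r ≤ ⟪b, x⟫) :
    α b ^ 2 / (∑ a ∈ A, α a ^ 2) * Real.exp (-(2 * r)) ≤ wt A α b x := by
  have hS : 0 < ∑ a ∈ A, α a ^ 2 :=
    Finset.sum_pos (fun a ha => by have := hα a ha; positivity) hA
  calc α b ^ 2 / (∑ a ∈ A, α a ^ 2) * Real.exp (-(2 * r))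
      = α b ^ 2 * Real.exp (2 * (s - r)) / ((∑ a ∈ A, α a ^ 2) * Real.exp (2 * s)) := by
        rw [mul_div_mul_comm, ← Real.exp_sub]
        ring_nf
    _ ≤ α b ^ 2 * Real.exp (2 * ⟪b, x⟫) / covK A α x := by
        gcongr
        · exact covK_pos hA hα x
        · exact covK_le_of_forall_inner_le h

theorem covK_div_K0e_le {a0 : Vm m} {α0 : ℝ} (hα0 : α0 ≠ 0) {x : Vm m} {s : ℝ}
    (h : ∀ a ∈ A, ⟪a, x⟫ ≤ s) :
    covK A α x / K0e A α a0 α0 x ≤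
      (∑ a ∈ A, α a ^ 2) / α0 ^ 2 * Real.exp (2 * (s - ⟪a0, x⟫)) := by
  have hf0 : f0e a0 α0 x ^ 2 = α0 ^ 2 * Real.exp (2 * ⟪a0, x⟫) := by
    rw [f0e, mul_pow, ← Real.exp_nat_mul]
    norm_num
  have hcovK : 0 ≤ covK A α x := covK_nonneg x
  calc covK A α x / K0e A α a0 α0 x ≤ covK A α x / f0e a0 α0 x ^ 2 := by
        gcongr
        · rw [hf0]; positivity
        · exact le_add_of_nonneg_left hcovK
    _ ≤ (∑ a ∈ A, α a ^ 2) * Real.exp (2 * s) / (α0 ^ 2 * Real.exp (2 * ⟪a0, x⟫)) := by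
        rw [hf0]
        gcongr
        exact covK_le_of_forall_inner_le h
    _ = (∑ a ∈ A, α a ^ 2) / α0 ^ 2 * Real.exp (2 * (s - ⟪a0, x⟫)) := by
        rw [mul_div_mul_comm, ← Real.exp_sub, mul_sub]

theorem qform_le (a0 : Vm m) {x : Vm m} {c w : ℝ} (hc : 0 < c) (hw : 0 < w)
    (hcx : ∀ y, c * ‖y‖ ^ 2 ≤ ∑ a ∈ A, ⟪a - mmap A α x, y⟫ ^ 2)
    (hwx : ∀ a ∈ A, w ≤ wt A α a x) :
    0 ≤ qform A α a0 x ∧ qform A α a0 x ≤ ‖mmap A α x - a0‖ ^ 2 / (c * w) := by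
  refine dotProduct_inv_mulVec_le (mul_pos hc hw) (fun y => ?_) (mmap A α x - a0)
  rw [dotProduct_Gmat_mulVec]
  calc c * w * ‖y‖ ^ 2 = w * (c * ‖y‖ ^ 2) := by ring
    _ ≤ ∑ a ∈ A, w * ⟪a - mmap A α x, y⟫ ^ 2 := by
        rw [← Finset.mul_sum]
        gcongr
        exact hcx y
    _ ≤ atForm A α x y := by
        unfold atForm
        gcongr with a ha
        exact hwx a ha

theorem PsiF_le_sqrt {a0 : Vm m} {α0 : ℝ} {x : Vm m} (hq : 0 ≤ qform A α a0 x) :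
    PsiF A α a0 α0 x ≤
      Real.sqrt ((covK A α x / K0e A α a0 α0 x) ^ m * (1 + qform A α a0 x)) := by
  have hratio : 0 ≤ covK A α x / K0e A α a0 α0 x := covK_div_K0e_nonneg a0 α0 x
  have hf0 : f0e a0 α0 x ^ 2 / K0e A α a0 α0 x ≤ 1 :=
    div_le_one_of_le₀ (le_add_of_nonneg_left (covK_nonneg x))
      (add_nonneg (covK_nonneg x) (sq_nonneg _))
  have hpow : (covK A α x / K0e A α a0 α0 x) ^ ((m : ℝ) / 2) =
      Real.sqrt ((covK A α x / K0e A α a0 α0 x) ^ m) := by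
    rw [Real.sqrt_eq_rpow, ← Real.rpow_natCast, ← Real.rpow_mul hratio]
    ring_nf
  rw [PsiF, hpow, ← Real.sqrt_mul (by positivity)]
  gcongr
  nlinarith

theorem exists_qform_smul_le (hA : A.Nonempty) (hα : ∀ a ∈ A, 0 < α a)
    (hspan : affineSpan ℝ (A : Set (Vm m)) = ⊤) (a0 : Vm m) {p u : Vm m}
    (hp : p ∈ convexHull ℝ (A : Set (Vm m))) (hu : ‖u‖ = 1)
    (hpu : ∀ b ∈ convexHull ℝ (A : Set (Vm m)), ⟪b - p, u⟫ ≤ 0) :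
    ∃ C, ∀ t, 0 ≤ t → 0 ≤ qform A α a0 (t • u) ∧
      qform A α a0 (t • u) ≤ C * Real.exp (2 * diam (convexHull ℝ (A : Set (Vm m))) * t) := by
  set P := convexHull ℝ (A : Set (Vm m))
  set D := diam P
  have hPc : IsCompact P := A.finite_toSet.isCompact_convexHull (𝕜 := ℝ)
  obtain ⟨c, hc, hcP⟩ := exists_pos_mul_norm_sq_le_sum_inner_sub_sq hspan hPc
  set S := ∑ a ∈ A, α a ^ 2
  have hS : 0 < S := Finset.sum_pos (fun a ha => by have := hα a ha; positivity) hA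
  set β := A.inf' hA (fun a => α a ^ 2)
  have hβ : 0 < β := (Finset.lt_inf'_iff hA).mpr fun a ha => by have := hα a ha; positivity
  refine ⟨(D + ‖p - a0‖) ^ 2 / (c * (β / S)), fun t ht => ?_⟩
  set x := t • u
  have hray : ∀ b ∈ A, ⟪b, x⟫ ≤ ⟪p, x⟫ ∧ ⟪p, x⟫ - t * D ≤ ⟪b, x⟫ := fun b hb =>
    inner_smul_bounds_of_mem hPc.isBounded hp (subset_convexHull ℝ _ hb) hu
      (hpu b (subset_convexHull ℝ _ hb)) ht
  have hw : ∀ a ∈ A, β / S * Real.exp (-(2 * (t * D))) ≤ wt A α a x := by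
    intro a ha
    refine le_trans ?_ (wt_ge_of_inner_ge hA hα (fun b hb => (hray b hb).1) (hray a ha).2)
    gcongr
    exact Finset.inf'_le _ ha
  obtain ⟨hq0, hqle⟩ := qform_le a0 hc (by positivity) (hcP _ (mmap_mem_convexHull hA hα x)) hw
  refine ⟨hq0, hqle.trans ?_⟩
  have hμ : ‖mmap A α x - a0‖ ≤ D + ‖p - a0‖ := by
    calc ‖mmap A α x - a0‖ ≤ ‖mmap A α x - p‖ + ‖p - a0‖ :=
          norm_sub_le_norm_sub_add_norm_sub _ _ _
      _ ≤ D + ‖p - a0‖ := by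
          rw [← dist_eq_norm]
          gcongr
          exact dist_le_diam_of_mem hPc.isBounded (mmap_mem_convexHull hA hα x) hp
  calc ‖mmap A α x - a0‖ ^ 2 / (c * (β / S * Real.exp (-(2 * (t * D)))))
      ≤ (D + ‖p - a0‖) ^ 2 / (c * (β / S * Real.exp (-(2 * (t * D))))) := by gcongr
    _ = (D + ‖p - a0‖) ^ 2 / (c * (β / S)) * Real.exp (2 * D * t) := by
        rw [Real.exp_neg]
        field_simp

theorem exists_tendsto_PsiF_smul_nhds_zero (hm : 1 ≤ m) (hA : A.Nonempty)
    (hα : ∀ a ∈ A, 0 < α a) (hspan : affineSpan ℝ (A : Set (Vm m)) = ⊤) {a0 : Vm m} {α0 : ℝ}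
    (hα0 : α0 ≠ 0) (hdist : diam (convexHull ℝ (A : Set (Vm m))) / m <
      infDist a0 (convexHull ℝ (A : Set (Vm m)))) :
    ∃ u : Vm m, u ≠ 0 ∧ Tendsto (fun t : ℝ => PsiF A α a0 α0 (t • u)) atTop (𝓝 0) := by
  set P := convexHull ℝ (A : Set (Vm m))
  set d := infDist a0 P
  have hPc : IsCompact P := A.finite_toSet.isCompact_convexHull (𝕜 := ℝ)
  have hDd : diam P < d * m := (div_lt_iff₀ (by exact_mod_cast hm)).mp hdist
  have hd : 0 < d := (div_nonneg diam_nonneg (Nat.cast_nonneg m)).trans_lt hdist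
  obtain ⟨p, hp, u, hu, ha0, hpu⟩ := exists_unit_inner_eq_infDist hPc (convex_convexHull ℝ _)
    (convexHull_nonempty_iff.mpr (Finset.coe_nonempty.mpr hA)) hd
  obtain ⟨C, hC⟩ := exists_qform_smul_le hA hα hspan a0 hp hu hpu
  refine ⟨u, norm_ne_zero_iff.mp (hu ▸ one_ne_zero), ?_⟩
  have hr : ∀ᶠ t in atTop, 0 ≤ covK A α (t • u) / K0e A α a0 α0 (t • u) ∧
      covK A α (t • u) / K0e A α a0 α0 (t • u) ≤
        (∑ a ∈ A, α a ^ 2) / α0 ^ 2 * Real.exp (-(2 * d * t)) := by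
    filter_upwards [eventually_ge_atTop 0] with t ht
    refine ⟨covK_div_K0e_nonneg a0 α0 _, (covK_div_K0e_le hα0 fun a ha =>
      (inner_smul_bounds_of_mem hPc.isBounded hp (subset_convexHull ℝ _ ha) hu
        (hpu a (subset_convexHull ℝ _ ha)) ht).1).trans_eq ?_⟩
    have hsep : ⟪a0, u⟫ - ⟪p, u⟫ = d := by rw [← inner_sub_left]; exact ha0
    rw [inner_smul_right, inner_smul_right, ← hsep]
    ring_nf
  have hq : ∀ᶠ t in atTop, 0 ≤ qform A α a0 (t • u) ∧
      qform A α a0 (t • u) ≤ C * Real.exp (2 * diam P * t) :=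
    (eventually_ge_atTop 0).mono hC
  have hlim := tendsto_pow_mul_one_add_of_le_exp (by positivity [diam_nonneg (s := P)])
    (by linarith : 2 * diam P < 2 * d * m) hr hq
  refine squeeze_zero' (Eventually.of_forall fun t => PsiF_nonneg a0 α0 _) ?_
    (by simpa using hlim.sqrt)
  filter_upwards [eventually_ge_atTop 0] with t ht
  exact PsiF_le_sqrt (hC t ht).1

end Model

/-- If the Euclidean distance from `a0` to the Newton polytope
`P = conv(A)` exceeds `diam(P)/m`, then `U₋ = {x : Ψ(x) < 1}` is a nonempty, open
and unbounded subset of `ℝ^m`. -/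
theorem statement7 (m : ℕ) (hm : 1 ≤ m) (A : Finset (Vm m)) (hA : A.Nonempty)
    (α : Vm m → ℝ) (hα : ∀ a ∈ A, 0 < α a)
    (hspan : affineSpan ℝ (A : Set (Vm m)) = ⊤)
    (a0 : Vm m) (α0 : ℝ) (hα0 : 0 < α0)
    (hdist : Metric.diam (convexHull ℝ (A : Set (Vm m))) / m <
      Metric.infDist a0 (convexHull ℝ (A : Set (Vm m)))) :
    {x : Vm m | PsiF A α a0 α0 x < 1}.Nonempty ∧
    IsOpen {x : Vm m | PsiF A α a0 α0 x < 1} ∧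
    ¬ Bornology.IsBounded {x : Vm m | PsiF A α a0 α0 x < 1} := by
  obtain ⟨u, hu, hlim⟩ := exists_tendsto_PsiF_smul_nhds_zero hm hA hα hspan hα0.ne' hdist
  have hray : ∀ᶠ t : ℝ in atTop, t • u ∈ {x : Vm m | PsiF A α a0 α0 x < 1} :=
    hlim.eventually (gt_mem_nhds one_pos)
  obtain ⟨t, ht⟩ := hray.exists
  exact ⟨⟨t • u, ht⟩, isOpen_lt (continuous_PsiF hA hα hspan a0 α0) continuous_const,
    not_isBounded_of_eventually_smul_mem hu hray⟩
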